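/- Let n ≥ 2 and N ≥ 1, and let k : ZMod N → (Fin n → ℝ) satisfy k^1_s ≠ 0 for all s. Define ∇F(k) by ∇F(k)^1_s = 1/k^1_s and ∇F(k)^i_s = 0 for i ≥ 2, and ∇G(k) by ∇G(k)^1_s = −k^2_{s+1}/((k^1_s)^2 k^1_{s+1}) − k^2_s/((k^1_s)^2 k^1_{s−1}), ∇G(k)^2_s = 1/(k^1_s k^1_{s−1}), and ∇G(k)^i_s = 0 for i ≥ 3 (these are the gradients of the functionals Σ_s ln k^1_s and Σ_s k^2_{s+1}/(k^1_s k^1_{s+1})). Then ⟨∇F(k), ℋ(k)∇G(k)⟩ = 0, where ⟨θ,η⟩ = Σ_{s ∈ ZMod N} Σ_{i=1}^{n} θ^i_s η^i_s; i.e., the two functionals are in involution with respect to ℋ. -/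

import Mathlib

/-- The operator `ℋ(k)` acting on sequences `θ : ZMod N → Fin n → ℝ`.
With the paper's components `i = 1,…,n` corresponding to the Lean indices
`0,…,n-1`, this is
`(ℋ(k)θ)^i_s = θ^{n+1−i}_{s+n+1−i} − θ^{n+1−i}_{s−i}
  + Σ_{j=1}^{n−i} ( k^{i+j}_{s+j} θ^j_{s+j} − k^{i+j}_s θ^j_{s−i} )`. -/
noncomputable def Hop {n N : ℕ} (k : ZMod N → Fin n → ℝ)
    (θ : ZMod N → Fin n → ℝ) : ZMod N → Fin n → ℝ := fun s i =>
  (∑ m : Fin n, if (m : ℕ) + (i : ℕ) + 1 = n then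
      θ (s + ((n - (i : ℕ) : ℕ) : ZMod N)) m
        - θ (s - (((i : ℕ) + 1 : ℕ) : ZMod N)) m
    else 0)
  + ∑ j : Fin n, ∑ m : Fin n, if (m : ℕ) = (i : ℕ) + (j : ℕ) + 1 then
      k (s + (((j : ℕ) + 1 : ℕ) : ZMod N)) m *
          θ (s + (((j : ℕ) + 1 : ℕ) : ZMod N)) j
        - k s m * θ (s - (((i : ℕ) + 1 : ℕ) : ZMod N)) j
    else 0

private lemma fin_sum_ite {n : ℕ} (c : ℕ) (f : Fin n → ℝ) :
    (∑ m : Fin n, if (m : ℕ) = c then f m else 0)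
      = if h : c < n then f ⟨c, h⟩ else 0 := by
  split_ifs with h
  · rw [Finset.sum_eq_single (⟨c, h⟩ : Fin n)]
    · simp
    · intro b _ hb
      rw [if_neg]
      intro hb'; exact hb (Fin.ext hb')
    · simp
  · apply Finset.sum_eq_zero
    intro m _
    rw [if_neg]
    intro hm; exact h (hm ▸ m.isLt)

private lemma hop_eval {n N : ℕ} [NeZero N] (hn : 2 ≤ n)
    (k θ : ZMod N → Fin n → ℝ)
    (hθz : ∀ r (j : Fin n), 2 ≤ (j : ℕ) → θ r j = 0) (s : ZMod N) (h0 : 0 < n) :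
    Hop k θ s ⟨0, h0⟩ =
      ((if h : 2 < n then k (s+2) ⟨2, h⟩ else 1) * θ (s+2) ⟨1, Nat.lt_of_lt_of_le Nat.one_lt_two hn⟩
        - (if h : 2 < n then k s ⟨2, h⟩ else 1) * θ (s-1) ⟨1, Nat.lt_of_lt_of_le Nat.one_lt_two hn⟩)
      + (k (s+1) ⟨1, Nat.lt_of_lt_of_le Nat.one_lt_two hn⟩ * θ (s+1) ⟨0, by omega⟩
        - k s ⟨1, Nat.lt_of_lt_of_le Nat.one_lt_two hn⟩ * θ (s-1) ⟨0, by omega⟩) := by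
  have e0 : ((⟨0, h0⟩ : Fin n) : ℕ) = 0 := rfl
  simp only [Hop, e0, Nat.add_zero, Nat.zero_add, Nat.sub_zero, Nat.cast_one]
  have ec : ∀ m : Fin n, ((m : ℕ) + 1 = n) = ((m : ℕ) = n - 1) :=
    fun m => propext (by omega)
  simp only [ec, fin_sum_ite, dif_pos (show n - 1 < n by omega)]
  have h1 : 1 < n := by omega
  have hne : (⟨0, h0⟩ : Fin n) ≠ ⟨1, h1⟩ := by simp [Fin.ext_iff]
  have hvan : ∀ c : Fin n, c ≠ ⟨0, h0⟩ ∧ c ≠ ⟨1, h1⟩ →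
      (if h : (c : ℕ) + 1 < n then
          k (s + (((c : ℕ) + 1 : ℕ) : ZMod N)) ⟨(c : ℕ) + 1, h⟩ *
              θ (s + (((c : ℕ) + 1 : ℕ) : ZMod N)) c
            - k s ⟨(c : ℕ) + 1, h⟩ * θ (s - 1) c
        else 0) = 0 := by
    intro c hc
    have h2 : 2 ≤ (c : ℕ) := by
      rcases hc with ⟨a, b⟩
      simp only [ne_eq, Fin.ext_iff] at a b
      omega
    rw [hθz _ _ h2, hθz _ _ h2]
    split <;> ring
  rw [Fintype.sum_eq_add (⟨0, h0⟩ : Fin n) ⟨1, h1⟩ hne hvan]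
  have e1 : ((⟨1, h1⟩ : Fin n) : ℕ) = 1 := rfl
  simp only [e0, e1, Nat.zero_add, Nat.cast_one, Nat.reduceAdd, Nat.cast_ofNat, dif_pos h1]
  rcases lt_or_ge 2 n with h2 | h2
  · rw [dif_pos h2, dif_pos h2, dif_pos h2,
      hθz _ ⟨n - 1, by omega⟩ (show 2 ≤ n - 1 by omega),
      hθz _ ⟨n - 1, by omega⟩ (show 2 ≤ n - 1 by omega)]
    ring
  · have hn2 : n = 2 := by omega
    subst hn2
    norm_num

private lemma sum_shift {N : ℕ} [NeZero N] (c : ZMod N) (f : ZMod N → ℝ) :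
    ∑ s : ZMod N, f (s + c) = ∑ s : ZMod N, f s :=
  Fintype.sum_equiv (Equiv.addRight c) _ _ fun _ => rfl

private lemma aux {n N : ℕ} [NeZero N] (hn : 2 ≤ n) (k : ZMod N → Fin n → ℝ)
    (K K2 : ZMod N → ℝ) (θ : ZMod N → Fin n → ℝ)
    (hk : ∀ s, K s ≠ 0)
    (hKdef : ∀ s (h : 0 < n), k s ⟨0, h⟩ = K s)
    (hK2def : ∀ s (h : 1 < n), k s ⟨1, h⟩ = K2 s)
    (hθ0 : ∀ r (h : 0 < n), θ r ⟨0, h⟩ =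
      -(K2 (r + 1) / (K r ^ 2 * K (r + 1))) - K2 r / (K r ^ 2 * K (r - 1)))
    (hθ1 : ∀ r (h : 1 < n), θ r ⟨1, h⟩ = 1 / (K r * K (r - 1)))
    (hθz : ∀ r (j : Fin n), 2 ≤ (j : ℕ) → θ r j = 0) :
    (∑ s : ZMod N, ∑ i : Fin n,
      (if (i : ℕ) = 0 then 1 / k s i else 0) * Hop k θ s i) = 0 := by
  have h0 : 0 < n := by omega
  have h1 : 1 < n := by omega
  set C : ZMod N → ℝ := fun s => if h : 2 < n then k s ⟨2, h⟩ else 1 with hC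
  set P : ZMod N → ℝ := fun s => C s / (K (s - 2) * K s * K (s - 1)) with hP
  set Q : ZMod N → ℝ := fun s => K2 s * θ s ⟨0, h0⟩ / K (s - 1) with hQ
  set R : ZMod N → ℝ := fun s => K2 (s + 1) * θ s ⟨0, h0⟩ / K (s + 1) with hR
  set W : ZMod N → ℝ := fun s => (K2 s / (K (s - 1) * K s)) ^ 2 with hW
  -- index arithmetic lemmas in ZMod N
  have za : ∀ s : ZMod N, s + 2 - 2 = s := fun s => by ring
  have zb : ∀ s : ZMod N, s + 2 - 1 = s + 1 := fun s => by ring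
  have zc : ∀ s : ZMod N, s + 1 - 1 = s := fun s => by ring
  have zd : ∀ s : ZMod N, s - 1 + 1 = s := fun s => by ring
  have ze : ∀ s : ZMod N, s - 1 - 1 = s - 2 := fun s => by ring
  have hinner : ∀ s, (∑ i : Fin n,
      (if (i : ℕ) = 0 then 1 / k s i else 0) * Hop k θ s i)
      = (1 / K s) * Hop k θ s ⟨0, h0⟩ := by
    intro s
    rw [Finset.sum_eq_single (⟨0, h0⟩ : Fin n)]
    · rw [if_pos rfl, hKdef s h0]
    · intro b _ hb
      rw [if_neg, zero_mul]
      intro hb0; exact hb (Fin.ext hb0)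
    · simp
  have step1 : ∀ s, (∑ i : Fin n,
      (if (i : ℕ) = 0 then 1 / k s i else 0) * Hop k θ s i)
      = P (s + 2) - P s + (Q (s + 1) - R (s - 1)) := by
    intro s
    rw [hinner s, hop_eval hn k θ hθz s h0]
    rw [show (if h : 2 < n then k (s + 2) ⟨2, h⟩ else 1) = C (s + 2) from rfl,
      show (if h : 2 < n then k s ⟨2, h⟩ else 1) = C s from rfl,
      hθ1 (s + 2) h1, hθ1 (s - 1) h1, hK2def (s + 1) h1, hK2def s h1]
    rw [hP, hQ, hR]
    simp only [za, zb, zc, zd, ze]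
    field_simp
  have step2 : (∑ s : ZMod N, (P (s + 2) - P s + (Q (s + 1) - R (s - 1))))
      = ∑ s : ZMod N, (Q s - R s) := by
    rw [Finset.sum_add_distrib, Finset.sum_sub_distrib, Finset.sum_sub_distrib,
      sum_shift 2 P, sum_shift 1 Q]
    have hRs : ∑ s : ZMod N, R (s - 1) = ∑ s : ZMod N, R s := by
      simpa [sub_eq_add_neg] using sum_shift (-1) R
    rw [hRs, Finset.sum_sub_distrib]
    ring
  have step3 : ∀ s : ZMod N, Q s - R s = W (s + 1) - W s := by
    intro s
    simp only [hQ, hR, hW]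
    rw [hθ0 s h0]
    simp only [zc]
    have := hk s; have := hk (s + 1); have := hk (s - 1)
    field_simp
    ring
  have step4 : (∑ s : ZMod N, (W (s + 1) - W s)) = 0 := by
    rw [Finset.sum_sub_distrib, sum_shift 1 W, sub_self]
  exact ((Finset.sum_congr rfl fun s _ => step1 s).trans step2).trans
    ((Finset.sum_congr rfl fun s _ => step3 s).trans step4)

/-- the gradients of the functionals `Σ_s ln k^1_s` and
`Σ_s k^2_{s+1}/(k^1_s k^1_{s+1})` are in involution with respect to `ℋ(k)`. -/
theorem stmt_10 {n N : ℕ} [NeZero N] (hn : 2 ≤ n) (k : ZMod N → Fin n → ℝ)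
    (hk : ∀ s, k s ⟨0, by omega⟩ ≠ 0) :
    (∑ s : ZMod N, ∑ i : Fin n,
      (if (i : ℕ) = 0 then 1 / k s i else 0) *
        Hop k (fun r j =>
          if (j : ℕ) = 0 then
            -(k (r + 1) ⟨1, by omega⟩ / ((k r j) ^ 2 * k (r + 1) j))
              - k r ⟨1, by omega⟩ / ((k r j) ^ 2 * k (r - 1) j)
          else if (j : ℕ) = 1 then
            1 / (k r ⟨0, by omega⟩ * k (r - 1) ⟨0, by omega⟩)
          else 0) s i) = 0 := by
  have h0 : 0 < n := by omega
  have h1 : 1 < n := by omega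
  refine aux hn k (fun s => k s ⟨0, h0⟩) (fun s => k s ⟨1, h1⟩) _
    (fun s => hk s) (fun s h => rfl) (fun s h => rfl) ?_ ?_ ?_
  · intro r h
    rw [if_pos rfl]
  · intro r h
    rw [if_neg (show ¬((1 : ℕ) = 0) by omega), if_pos rfl]
  · intro r j hj
    rw [if_neg (by omega), if_neg (by omega)]
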